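/- arXiv:2310.03826 — 2 statements merged into one kernel-verified Lean document; each statement's English description precedes it below -/
import Mathlib

section
/- Let R be a commutative ring and let n ≥ 2. Suppose given elements q₁, …, q_{n−1} ∈ R, elements a_{i,ℓ} ∈ R for 0 ≤ i ≤ n and ℓ ≥ 0 satisfying a_{i,0} = 1 for all i and a_{i,ℓ} = 0 whenever ℓ > i, and elements b₁, …, b_{n−1} ∈ R satisfying b_i = a_{i+1,1} − a_{i,1} for all 1 ≤ i ≤ n−1. Assume that 1 − q_i is a unit of R for each 1 ≤ i ≤ n−1 and that a_{i,i} is a unit of R for each 2 ≤ i ≤ n. Then the following two families of relations are equivalent: (i) for all 1 ≤ i ≤ n−1 and all 1 ≤ ℓ ≤ i+1, (1 − q_i)·(a_{i+1,ℓ} − a_{i,ℓ}) = b_i·(a_{i,ℓ−1} − q_i·a_{i−1,ℓ−1}); and (ii) for all 1 ≤ i ≤ n−1 and all 1 ≤ ℓ ≤ i+1, a_{i,i}·(a_{i+1,ℓ} − a_{i,ℓ}) = a_{i+1,i+1}·(a_{i,ℓ−1} − q_i·a_{i−1,ℓ−1}). -/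
/-- Ring-theoretic content of the reduction lemma for the quantum K Whitney relations of the
complete flag variety. `a i ℓ` plays the role of `∧^ℓ 𝒮_i` (so `a i 0 = 1` and `a i ℓ = 0`
for `ℓ > i`), `b i` plays the role of `𝒮_{i+1}/𝒮_i` (so `b i = a (i+1) 1 - a i 1`), and the
`q i` are the quantum parameters. Assuming `1 - q i` is a unit for `1 ≤ i ≤ n-1` and `a i i`
is a unit for `2 ≤ i ≤ n`, the two families of relations are equivalent. -/
theorem whitney_relations_reduction
    {R : Type*} [CommRing R] (n : ℕ) (hn : 2 ≤ n)
    (q : ℕ → R) (a : ℕ → ℕ → R) (b : ℕ → R)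
    (ha0 : ∀ i, i ≤ n → a i 0 = 1)
    (hatop : ∀ i, i ≤ n → ∀ ℓ, i < ℓ → a i ℓ = 0)
    (hb : ∀ i, 1 ≤ i → i ≤ n - 1 → b i = a (i + 1) 1 - a i 1)
    (hq : ∀ i, 1 ≤ i → i ≤ n - 1 → IsUnit (1 - q i))
    (ha : ∀ i, 2 ≤ i → i ≤ n → IsUnit (a i i)) :
    (∀ i, 1 ≤ i → i ≤ n - 1 → ∀ ℓ, 1 ≤ ℓ → ℓ ≤ i + 1 →
        (1 - q i) * (a (i + 1) ℓ - a i ℓ) = b i * (a i (ℓ - 1) - q i * a (i - 1) (ℓ - 1)))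
      ↔ (∀ i, 1 ≤ i → i ≤ n - 1 → ∀ ℓ, 1 ≤ ℓ → ℓ ≤ i + 1 →
        a i i * (a (i + 1) ℓ - a i ℓ)
          = a (i + 1) (i + 1) * (a i (ℓ - 1) - q i * a (i - 1) (ℓ - 1))) := by
  constructor
  · intro H i hi1 hin ℓ hl1 hl2
    -- key : (1 - q i) * a (i+1) (i+1) = b i * a i i   (from (i) at ℓ = i+1)
    have key : (1 - q i) * a (i + 1) (i + 1) = b i * a i i := by
      have h := H i hi1 hin (i + 1) (by omega) le_rfl
      simp only [Nat.add_sub_cancel] at h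
      rw [hatop i (by omega) (i + 1) (by omega),
        hatop (i - 1) (by omega) i (by omega)] at h
      linear_combination h
    have h2 := H i hi1 hin ℓ hl1 hl2
    apply (hq i hi1 hin).mul_left_cancel
    linear_combination a i i * h2 - (a i (ℓ - 1) - q i * a (i - 1) (ℓ - 1)) * key
  · intro H i hi1 hin ℓ hl1 hl2
    -- key : a i i * b i = a (i+1) (i+1) * (1 - q i)   (from (ii) at ℓ = 1)
    have key : a i i * b i = a (i + 1) (i + 1) * (1 - q i) := by
      have h := H i hi1 hin 1 le_rfl (by omega)
      simp only [Nat.sub_self] at h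
      rw [ha0 i (by omega), ha0 (i - 1) (by omega), ← hb i hi1 hin] at h
      linear_combination h
    rcases eq_or_lt_of_le hi1 with h1 | h2i
    · -- i = 1
      subst h1
      interval_cases ℓ
      · simp only [Nat.sub_self]
        rw [ha0 1 (by omega), ha0 0 (by omega), hb 1 le_rfl hin]
        ring
      · show (1 - q 1) * (a 2 2 - a 1 2) = b 1 * (a 1 1 - q 1 * a 0 1)
        rw [hatop 1 (by omega) 2 (by omega), hatop 0 (by omega) 1 (by omega)]
        linear_combination -key
    · -- 2 ≤ i
      have h2 := H i hi1 hin ℓ hl1 hl2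
      apply (ha i h2i (by omega)).mul_left_cancel
      linear_combination (1 - q i) * h2 - (a i (ℓ - 1) - q i * a (i - 1) (ℓ - 1)) * key
end

section
/- Let R := ℤ[T₁^{±1}, T₂^{±1}, T₃^{±1}] be the Laurent polynomial ring in three variables over ℤ, and let P := R[x, e₁, e₂, y₁, y₂, q₁, q₂] be the polynomial ring over R in seven variables. Let I ⊆ P be the ideal generated by the five polynomials: x + y₁ − e₁; x·y₁ − (1 − q₁)·e₂; (1 − q₂)·(e₁ + y₂ − (T₁ + T₂ + T₃)); (e₁ − q₂·x)·y₂ − (1 − q₂)·((T₁T₂ + T₁T₃ + T₂T₃) − e₂); and e₂·y₂ − (1 − q₂)·T₁T₂T₃. Then the element e₁ + y₂ − (T₁ + T₂ + T₃) does not belong to I (so its class in P/I is nonzero), while (1 − q₂)·(e₁ + y₂ − (T₁ + T₂ + T₃)) belongs to I. -/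
noncomputable section

/-- The Laurent polynomial ring `R = ℤ[T₁^{±1}, T₂^{±1}, T₃^{±1}]` in three variables,
realized as the group algebra of `ℤ³` over `ℤ`. -/
abbrev QKLaurent : Type := AddMonoidAlgebra ℤ (Fin 3 →₀ ℤ)

/-- The invertible variable `Tᵢ` of the Laurent polynomial ring. -/
def QKT (i : Fin 3) : QKLaurent := AddMonoidAlgebra.of' ℤ (Fin 3 →₀ ℤ) (Finsupp.single i 1)

/-- The polynomial ring `P = R[x, e₁, e₂, y₁, y₂, q₁, q₂]` over
`R = ℤ[T₁^{±1}, T₂^{±1}, T₃^{±1}]`. -/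
abbrev QKPoly : Type := MvPolynomial (Fin 7) QKLaurent

namespace QKPoly

open MvPolynomial

def x : QKPoly := X 0
def e₁ : QKPoly := X 1
def e₂ : QKPoly := X 2
def y₁ : QKPoly := X 3
def y₂ : QKPoly := X 4
def q₁ : QKPoly := X 5
def q₂ : QKPoly := X 6

/-- `T₁ + T₂ + T₃` as a constant of `P`. -/
def e₁T : QKPoly := C (QKT 0 + QKT 1 + QKT 2)

/-- `T₁T₂ + T₁T₃ + T₂T₃` as a constant of `P`. -/
def e₂T : QKPoly := C (QKT 0 * QKT 1 + QKT 0 * QKT 2 + QKT 1 * QKT 2)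

/-- `T₁T₂T₃` as a constant of `P`. -/
def e₃T : QKPoly := C (QKT 0 * QKT 1 * QKT 2)

/-- The presentation ideal `I_q^poly` of the equivariant quantum K ring of `Fl(1,2;3)`. -/
def Iq : Ideal QKPoly :=
  Ideal.span
    { x + y₁ - e₁,
      x * y₁ - (1 - q₁) * e₂,
      (1 - q₂) * (e₁ + y₂ - e₁T),
      (e₁ - q₂ * x) * y₂ - (1 - q₂) * (e₂T - e₂),
      e₂ * y₂ - (1 - q₂) * e₃T }

end QKPoly

open MvPolynomial in
private def qkVal : Fin 7 → QKLaurent := fun i =>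
  match i with
  | 0 => QKT 0 + QKT 1 + QKT 2 | 1 => QKT 0 + QKT 1 + QKT 2
  | 2 => 0 | 3 => 0 | 4 => 1 | 5 => 0 | 6 => 1

private lemma qkVal0 : qkVal 0 = QKT 0 + QKT 1 + QKT 2 := rfl
private lemma qkVal1 : qkVal 1 = QKT 0 + QKT 1 + QKT 2 := rfl
private lemma qkVal2 : qkVal 2 = 0 := rfl
private lemma qkVal3 : qkVal 3 = 0 := rfl
private lemma qkVal4 : qkVal 4 = 1 := rfl
private lemma qkVal5 : qkVal 5 = 0 := rfl
private lemma qkVal6 : qkVal 6 = 1 := rfl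

open MvPolynomial in
private def qkEval : QKPoly →ₐ[QKLaurent] QKLaurent := aeval qkVal

private lemma qkEval_vanish : QKPoly.Iq ≤ RingHom.ker (qkEval : QKPoly →+* QKLaurent) := by
  rw [QKPoly.Iq, Ideal.span_le]
  intro p hp
  simp only [Set.mem_insert_iff, Set.mem_singleton_iff] at hp
  rcases hp with h | h | h | h | h <;> subst h <;>
    simp [RingHom.mem_ker, qkEval, QKPoly.x, QKPoly.e₁, QKPoly.e₂, QKPoly.y₁, QKPoly.y₂,
      QKPoly.q₁, QKPoly.q₂, QKPoly.e₁T, QKPoly.e₂T, QKPoly.e₃T,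
      qkVal0, qkVal1, qkVal2, qkVal3, qkVal4, qkVal5, qkVal6]

/-- The element `e₁ + y₂ - (T₁ + T₂ + T₃)` does not belong to the presentation ideal
`I_q^poly` (so its class in `P/I` is nonzero), whereas `(1 - q₂)·(e₁ + y₂ - (T₁ + T₂ + T₃))`
does belong to it. -/
theorem qk_fl123_kernel_element :
    (QKPoly.e₁ + QKPoly.y₂ - QKPoly.e₁T) ∉ QKPoly.Iq ∧
      (1 - QKPoly.q₂) * (QKPoly.e₁ + QKPoly.y₂ - QKPoly.e₁T) ∈ QKPoly.Iq := by
  constructor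
  · intro h
    have h0 : qkEval (QKPoly.e₁ + QKPoly.y₂ - QKPoly.e₁T) = 0 := qkEval_vanish h
    simp [qkEval, QKPoly.e₁, QKPoly.y₂, QKPoly.e₁T, qkVal1, qkVal4] at h0
  · exact Ideal.subset_span (by simp)

end
end
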